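/- arXiv:2101.09966 — 2 statements merged into one kernel-verified Lean document; each statement's English description precedes it below -/
import Mathlib

section
/- Let R be a commutative ring and, for each maximal ideal m of R, let X(m) be a Thomason subset of Spec(R_m). If the family {X(m) : m a maximal ideal of R} satisfies condition (†), then ⋃_{m maximal} X(m)* = {p ∈ Spec(R) : for every maximal ideal m of R with p ⊆ m, the prime p_m belongs to X(m)}. -/
open PrimeSpectrum
universe u

/-- A subset of `Spec A` is Thomason if it is a union of the zero loci
of a set of finitely generated ideals. -/
def IsThomason {A : Type*} [CommRing A] (X : Set (PrimeSpectrum A)) : Prop :=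
  ∃ 𝓘 : Set (Ideal A), (∀ I ∈ 𝓘, I.FG) ∧
    X = ⋃ I ∈ 𝓘, PrimeSpectrum.zeroLocus (I : Set A)

variable {R : Type u} [CommRing R]

/-- The map `Spec (R_m) → Spec R` induced by the localization map. -/
def locMap (m : MaximalSpectrum R) :
    PrimeSpectrum (Localization.AtPrime m.asIdeal) → PrimeSpectrum R :=
  PrimeSpectrum.comap (algebraMap R (Localization.AtPrime m.asIdeal))

/-- `Y*`: the image of a subset of `Spec (R_m)` in `Spec R`. -/
def star (m : MaximalSpectrum R)
    (Y : Set (PrimeSpectrum (Localization.AtPrime m.asIdeal))) : Set (PrimeSpectrum R) :=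
  locMap m '' Y

/-- `p_m`: the prime ideal `p R_m` of `R_m` corresponding to a prime `p ⊆ m` of `R`. -/
def localizedPrime (m : MaximalSpectrum R) (p : PrimeSpectrum R)
    (hp : p.asIdeal ≤ m.asIdeal) : PrimeSpectrum (Localization.AtPrime m.asIdeal) :=
  ⟨p.asIdeal.map (algebraMap R (Localization.AtPrime m.asIdeal)),
    IsLocalization.isPrime_of_isPrime_disjoint m.asIdeal.primeCompl _ p.asIdeal p.isPrime
      (Set.disjoint_left.mpr fun _ hx hxp => hx (hp hxp))⟩

/-- Condition (†). -/
def Dagger (Xf : ∀ m : MaximalSpectrum R, Set (PrimeSpectrum (Localization.AtPrime m.asIdeal))) :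
    Prop :=
  ∀ m m' : MaximalSpectrum R,
    {p ∈ star m (Xf m) | p.asIdeal ≤ m'.asIdeal} =
      {p ∈ star m' (Xf m') | p.asIdeal ≤ m.asIdeal}

/-! Localizing at `m` identifies `Spec R_m` with the primes contained in `m`, via `q ↦ q ∩ R` and
`p ↦ p_m`, so `p ∈ X(m)*` exactly when `p ⊆ m` and `p_m ∈ X(m)`. Condition (†) moves membership
in `X(m)*` to `X(m')*` for every maximal `m' ⊇ p`, and every prime lies in some maximal ideal. -/

theorem locMap_asIdeal_le (m : MaximalSpectrum R)
    (q : PrimeSpectrum (Localization.AtPrime m.asIdeal)) : (locMap m q).asIdeal ≤ m.asIdeal :=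
  fun x hx => by_contra fun hxm => q.isPrime.ne_top <| Ideal.eq_top_of_isUnit_mem _ hx <|
    IsLocalization.map_units (Localization.AtPrime m.asIdeal) (⟨x, hxm⟩ : m.asIdeal.primeCompl)

theorem locMap_localizedPrime (m : MaximalSpectrum R) (p : PrimeSpectrum R)
    (hp : p.asIdeal ≤ m.asIdeal) : locMap m (localizedPrime m p hp) = p :=
  PrimeSpectrum.ext <| IsLocalization.under_map_of_isPrime_disjoint m.asIdeal.primeCompl _
    p.isPrime (Set.disjoint_left.mpr fun _ hx hxp => hx (hp hxp))

theorem localizedPrime_locMap (m : MaximalSpectrum R)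
    (q : PrimeSpectrum (Localization.AtPrime m.asIdeal)) (hq : (locMap m q).asIdeal ≤ m.asIdeal) :
    localizedPrime m (locMap m q) hq = q :=
  PrimeSpectrum.ext <| IsLocalization.map_under m.asIdeal.primeCompl _ q.asIdeal

theorem mem_star_iff (m : MaximalSpectrum R)
    (Y : Set (PrimeSpectrum (Localization.AtPrime m.asIdeal))) (p : PrimeSpectrum R) :
    p ∈ star m Y ↔ ∃ hp : p.asIdeal ≤ m.asIdeal, localizedPrime m p hp ∈ Y := by
  constructor
  · rintro ⟨q, hq, rfl⟩
    exact ⟨locMap_asIdeal_le m q, (localizedPrime_locMap m q _).symm ▸ hq⟩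
  · rintro ⟨hp, hpY⟩
    exact ⟨_, hpY, locMap_localizedPrime m p hp⟩

theorem mem_star_of_dagger
    {Xf : ∀ m : MaximalSpectrum R, Set (PrimeSpectrum (Localization.AtPrime m.asIdeal))}
    (hDagger : Dagger Xf) {m m' : MaximalSpectrum R} {p : PrimeSpectrum R}
    (hp : p ∈ star m (Xf m)) (hpm' : p.asIdeal ≤ m'.asIdeal) : p ∈ star m' (Xf m') :=
  ((hDagger m m').subset ⟨hp, hpm'⟩).1

theorem stmt1_general
    (Xf : ∀ m : MaximalSpectrum R, Set (PrimeSpectrum (Localization.AtPrime m.asIdeal)))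
    (hDagger : Dagger Xf) :
    (⋃ m, star m (Xf m)) =
      {p : PrimeSpectrum R |
        ∀ (m : MaximalSpectrum R) (hp : p.asIdeal ≤ m.asIdeal), localizedPrime m p hp ∈ Xf m} := by
  ext p
  refine Set.mem_iUnion.trans ⟨?_, fun h => ?_⟩
  · rintro ⟨m, hp⟩ m' hpm'
    exact ((mem_star_iff m' _ p).1 (mem_star_of_dagger hDagger hp hpm')).2
  · obtain ⟨m, hm, hpm⟩ := p.asIdeal.exists_le_maximal p.isPrime.ne_top
    exact ⟨⟨m, hm⟩, (mem_star_iff _ _ p).2 ⟨hpm, h ⟨m, hm⟩ hpm⟩⟩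

/-- If the family `{X(m)}` of Thomason subsets satisfies (†), then
`⋃ X(m)* = {p ∈ Spec R : p_m ∈ X(m) for every maximal ideal m ⊇ p}`. -/
theorem stmt1
    (Xf : ∀ m : MaximalSpectrum R, Set (PrimeSpectrum (Localization.AtPrime m.asIdeal)))
    (hXf : ∀ m, IsThomason (Xf m)) (hDagger : Dagger Xf) :
    (⋃ m, star m (Xf m)) =
      {p : PrimeSpectrum R |
        ∀ (m : MaximalSpectrum R) (hp : p.asIdeal ≤ m.asIdeal), localizedPrime m p hp ∈ Xf m} :=
  stmt1_general Xf hDagger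
end

section
/- Let R be a commutative ring. The assignments X ↦ {X_m : m a maximal ideal of R} and {X(m) : m} ↦ ⋃_m X(m)* are mutually inverse bijections between Thomason subsets of Spec(R) and compatible families of Thomason subsets. Concretely: (a) if X ⊆ Spec(R) is Thomason, then for every maximal ideal m the set X_m = {p_m : p ∈ X, p ⊆ m} is a Thomason subset of Spec(R_m), the family {X_m : m} is compatible, and ⋃_m (X_m)* = X; (b) if {X(m) : m} is a compatible family of Thomason subsets and X = ⋃_m X(m)*, then X_m = X(m) for every maximal ideal m. -/
open PrimeSpectrum
universe u

variable {R : Type u} [CommRing R]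

/-- `Z_m = {p_m : p ∈ Z, p ⊆ m}`, the localization of a subset `Z ⊆ Spec R` at `m`. -/
def setLoc (m : MaximalSpectrum R) (Z : Set (PrimeSpectrum R)) :
    Set (PrimeSpectrum (Localization.AtPrime m.asIdeal)) :=
  {q | ∃ p ∈ Z, ∃ hp : p.asIdeal ≤ m.asIdeal, localizedPrime m p hp = q}

/-- A compatible family of Thomason subsets: each `X(m)` is Thomason, the family
satisfies (†), and the union `⋃ X(m)*` is a Thomason subset of `Spec R`. -/
def CompatibleFamily
    (Xf : ∀ m : MaximalSpectrum R, Set (PrimeSpectrum (Localization.AtPrime m.asIdeal))) :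
    Prop :=
  (∀ m, IsThomason (Xf m)) ∧ Dagger Xf ∧ IsThomason (⋃ m, star m (Xf m))

/-!
Since `Spec R_m → Spec R` is injective with image the primes contained in `m`, the set `X_m` is
just the preimage of `X`, and Thomason subsets pull back to Thomason subsets along any `comap`.
Conversely, for a prime `p ⊆ m` lying in some `X(m')*`, condition (†) for the pair `(m, m')`
puts `p` in `X(m)*`, so the preimage of `⋃ X(m')*` in `Spec R_m` is `X(m)`.
-/

theorem IsThomason.preimage_comap {A B : Type*} [CommRing A] [CommRing B] (f : A →+* B)
    {X : Set (PrimeSpectrum A)} (hX : IsThomason X) : IsThomason (comap f ⁻¹' X) := by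
  obtain ⟨𝓘, hfg, rfl⟩ := hX
  refine ⟨Ideal.map f '' 𝓘, Set.forall_mem_image.2 fun I hI => (hfg I hI).map f, ?_⟩
  simp only [Set.preimage_iUnion, preimage_comap_zeroLocus, Set.biUnion_image, Ideal.map,
    zeroLocus_span]

theorem range_locMap (m : MaximalSpectrum R) :
    Set.range (locMap m) = {p | p.asIdeal ≤ m.asIdeal} := by
  rw [locMap, localization_comap_range _ m.asIdeal.primeCompl]
  ext p
  simp only [Set.mem_ofPred_eq, Ideal.primeCompl, Submonoid.coe_set_mk,
    Subsemigroup.coe_set_mk, Set.disjoint_compl_left_iff_subset, SetLike.coe_subset_coe]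

theorem locMap_injective (m : MaximalSpectrum R) : Function.Injective (locMap m) :=
  localization_comap_injective _ m.asIdeal.primeCompl

theorem setLoc_eq_preimage (m : MaximalSpectrum R) (Z : Set (PrimeSpectrum R)) :
    setLoc m Z = locMap m ⁻¹' Z := by
  ext q
  constructor
  · rintro ⟨p, hpZ, hpm, rfl⟩
    rwa [Set.mem_preimage, locMap_localizedPrime]
  · intro hq
    exact ⟨locMap m q, hq, locMap_asIdeal_le m q,
      locMap_injective m (locMap_localizedPrime m _ (locMap_asIdeal_le m q))⟩

theorem star_setLoc (m : MaximalSpectrum R) (Z : Set (PrimeSpectrum R)) :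
    star m (setLoc m Z) = {p ∈ Z | p.asIdeal ≤ m.asIdeal} := by
  rw [_root_.star, setLoc_eq_preimage, Set.image_preimage_eq_inter_range, range_locMap]
  rfl

theorem isThomason_setLoc (m : MaximalSpectrum R) {Z : Set (PrimeSpectrum R)}
    (hZ : IsThomason Z) : IsThomason (setLoc m Z) := by
  rw [setLoc_eq_preimage]
  exact hZ.preimage_comap _

theorem iUnion_star_setLoc (Z : Set (PrimeSpectrum R)) : ⋃ m, star m (setLoc m Z) = Z := by
  refine Set.Subset.antisymm (Set.iUnion_subset fun m => ?_) fun p hp => ?_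
  · rw [star_setLoc]
    exact Set.sep_subset _ _
  · obtain ⟨M, hM, hpM⟩ := p.asIdeal.exists_le_maximal p.isPrime.ne_top
    exact Set.mem_iUnion.2 ⟨⟨M, hM⟩, (star_setLoc _ Z).symm ▸ ⟨hp, hpM⟩⟩

theorem dagger_setLoc (Z : Set (PrimeSpectrum R)) : Dagger fun m => setLoc m Z := by
  intro m m'
  ext p
  simp only [star_setLoc, Set.mem_ofPred_eq]
  tauto

theorem compatibleFamily_setLoc {Z : Set (PrimeSpectrum R)} (hZ : IsThomason Z) :
    CompatibleFamily fun m => setLoc m Z :=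
  ⟨fun m => isThomason_setLoc m hZ, dagger_setLoc Z, (iUnion_star_setLoc Z).symm ▸ hZ⟩

theorem setLoc_iUnion_star_of_dagger
    {Xf : ∀ m : MaximalSpectrum R, Set (PrimeSpectrum (Localization.AtPrime m.asIdeal))}
    (hXf : Dagger Xf) (m : MaximalSpectrum R) :
    setLoc m (⋃ m', star m' (Xf m')) = Xf m := by
  rw [setLoc_eq_preimage]
  refine Set.Subset.antisymm (fun q hq => ?_) fun q hq => Set.mem_iUnion.2 ⟨m, q, hq, rfl⟩
  obtain ⟨m', hqm'⟩ := Set.mem_iUnion.1 hq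
  have hq_star : locMap m q ∈ {p ∈ star m (Xf m) | p.asIdeal ≤ m'.asIdeal} :=
    (hXf m m').symm ▸ ⟨hqm', locMap_asIdeal_le m q⟩
  obtain ⟨q', hq', hq'q⟩ := hq_star.1
  exact locMap_injective m hq'q ▸ hq'

/-- Proposition (gluing of Thomason subsets): `X ↦ {X_m}` and
`{X(m)} ↦ ⋃ X(m)*` are mutually inverse bijections between Thomason subsets of
`Spec R` and compatible families of Thomason subsets. -/
theorem stmt2 :
    (∀ X : Set (PrimeSpectrum R), IsThomason X →
      CompatibleFamily (fun m => setLoc m X) ∧ (⋃ m, star m (setLoc m X)) = X) ∧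
    (∀ Xf : ∀ m : MaximalSpectrum R, Set (PrimeSpectrum (Localization.AtPrime m.asIdeal)),
      CompatibleFamily Xf → ∀ m, setLoc m (⋃ m', star m' (Xf m')) = Xf m) :=
  ⟨fun X hX => ⟨compatibleFamily_setLoc hX, iUnion_star_setLoc X⟩,
    fun _ hXf => setLoc_iUnion_star_of_dagger hXf.2.1⟩
end
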